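/- arXiv:0811.2656 — 9 statements merged into one kernel-verified Lean document; each statement's English description precedes it below -/
import Mathlib

section
/- In any triangle with sides a, b, c and medians m_a, m_b, m_c to those sides, we have a·m_a + b·m_b + c·m_c ≤ √(bc)·m_a + √(ac)·m_b + √(ab)·m_c. -/
/-!
Substitute `a = x²`, `b = y²`, `c = z²`. For each pair of sides, multiplying by `m_a + m_b` and
using `m_b² - m_a² = 3(a² - b²)/4` together with `2 m_a ≤ b + c`, `2 m_b ≤ a + c` and
`2 m_c ≤ a + b` gives `m_c (x - y)² ≤ (a - b)(m_b - m_a)`. Summing the three such inequalities and expanding the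
squares yields exactly the claim.
-/

open Real

noncomputable def median (a b c : ℝ) : ℝ := 1 / 2 * √(2 * b ^ 2 + 2 * c ^ 2 - a ^ 2)

section Median

variable {a b c : ℝ}

theorem median_comm (a b c : ℝ) : median a b c = median a c b := by
  unfold median
  ring_nf

theorem sq_le_two_mul_sq_add_two_mul_sq (ha : 0 ≤ a) (h : a ≤ b + c) :
    a ^ 2 ≤ 2 * b ^ 2 + 2 * c ^ 2 := by
  nlinarith [sq_nonneg (b - c)]

theorem median_pos (ha : 0 ≤ a) (h : a < b + c) : 0 < median a b c := by
  unfold median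
  have : a ^ 2 < 2 * b ^ 2 + 2 * c ^ 2 := by nlinarith [sq_nonneg (b - c)]
  have : 0 < √(2 * b ^ 2 + 2 * c ^ 2 - a ^ 2) := sqrt_pos.mpr (by linarith)
  positivity

theorem median_sq (ha : 0 ≤ a) (h : a ≤ b + c) :
    median a b c ^ 2 = (2 * b ^ 2 + 2 * c ^ 2 - a ^ 2) / 4 := by
  have := sq_le_two_mul_sq_add_two_mul_sq ha h
  rw [median, mul_pow, sq_sqrt (by linarith)]
  ring

theorem two_mul_median_le (hb : 0 ≤ b) (hc : 0 ≤ c) (h₁ : b ≤ a + c) (h₂ : c ≤ a + b) :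
    2 * median a b c ≤ b + c := by
  rw [median, ← mul_assoc, show (2 : ℝ) * (1 / 2) = 1 by norm_num, one_mul,
    sqrt_le_left (by positivity)]
  nlinarith [mul_nonneg (sub_nonneg.mpr h₁) (sub_nonneg.mpr h₂)]

theorem median_mul_sqrt_sub_sqrt_sq_le (ha : 0 < a) (hb : 0 < b) (hc : 0 < c)
    (hab : a < b + c) (hbc : b < a + c) (hca : c < a + b) :
    median c a b * (√a - √b) ^ 2 ≤ (a - b) * (median b a c - median a b c) := by
  have hsum_pos : 0 < median a b c + median b a c :=
    add_pos (median_pos ha.le hab) (median_pos hb.le hbc)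
  have hsum_le : 2 * (median a b c + median b a c) ≤ 3 * (a + b) := by
    linarith [two_mul_median_le hb.le hc.le hbc.le (by linarith) (a := a),
      two_mul_median_le ha.le hc.le hab.le (by linarith) (a := b)]
  have hc_le : 2 * median c a b ≤ a + b :=
    two_mul_median_le ha.le hb.le (by linarith) (by linarith)
  have hdiff : (median b a c - median a b c) * (median a b c + median b a c)
      = 3 / 4 * (a - b) * (a + b) := by
    linear_combination median_sq hb.le hbc.le - median_sq ha.le hab.le
  -- `a + b ≤ (√a + √b)²` and `(√a - √b)(√a + √b) = a - b`
  have hsqrt : (√a - √b) ^ 2 * (a + b) ≤ (a - b) ^ 2 := by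
    have hx := sq_sqrt ha.le
    have hy := sq_sqrt hb.le
    have hxy : 0 ≤ √a * √b := by positivity
    nlinarith [mul_nonneg (sq_nonneg (√a - √b)) hxy]
  refine le_of_mul_le_mul_right ?_ hsum_pos
  calc median c a b * (√a - √b) ^ 2 * (median a b c + median b a c)
      ≤ (a + b) / 2 * (√a - √b) ^ 2 * (3 * (a + b) / 2) := by
        gcongr <;> linarith
    _ = 3 / 4 * ((√a - √b) ^ 2 * (a + b)) * (a + b) := by ring
    _ ≤ 3 / 4 * (a - b) ^ 2 * (a + b) := by gcongr
    _ = (a - b) * (median b a c - median a b c) * (median a b c + median b a c) := by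
        rw [mul_assoc (a - b), hdiff]
        ring

end Median

theorem stmt4 (a b c : ℝ) (ha : 0 < a) (hb : 0 < b) (hc : 0 < c)
    (hab : a < b + c) (hbc : b < a + c) (hca : c < a + b) :
    a * ((1 / 2) * Real.sqrt (2 * b ^ 2 + 2 * c ^ 2 - a ^ 2)) +
      b * ((1 / 2) * Real.sqrt (2 * a ^ 2 + 2 * c ^ 2 - b ^ 2)) +
      c * ((1 / 2) * Real.sqrt (2 * a ^ 2 + 2 * b ^ 2 - c ^ 2)) ≤
    Real.sqrt (b * c) * ((1 / 2) * Real.sqrt (2 * b ^ 2 + 2 * c ^ 2 - a ^ 2)) +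
      Real.sqrt (a * c) * ((1 / 2) * Real.sqrt (2 * a ^ 2 + 2 * c ^ 2 - b ^ 2)) +
      Real.sqrt (a * b) * ((1 / 2) * Real.sqrt (2 * a ^ 2 + 2 * b ^ 2 - c ^ 2)) := by
  change a * median a b c + b * median b a c + c * median c a b ≤
    √(b * c) * median a b c + √(a * c) * median b a c + √(a * b) * median c a b
  have h₁ := median_mul_sqrt_sub_sqrt_sq_le ha hb hc hab hbc hca
  have h₂ := median_mul_sqrt_sub_sqrt_sq_le hb hc ha (by linarith) (by linarith) (by linarith)
  have h₃ := median_mul_sqrt_sub_sqrt_sq_le ha hc hb (by linarith) (by linarith) hbc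
  rw [median_comm c b a, median_comm b c a] at h₂
  rw [median_comm a c b] at h₃
  rw [sqrt_mul hb.le, sqrt_mul ha.le, sqrt_mul ha.le]
  linear_combination (h₁ + h₂ + h₃) / 2
    - (median b a c + median c a b) / 2 * sq_sqrt ha.le
    - (median a b c + median c a b) / 2 * sq_sqrt hb.le
    - (median a b c + median b a c) / 2 * sq_sqrt hc.le
end

section
/- For positive reals a > c with a, a, c the sides of a triangle (i.e. c < 2a), we have (a − √(ac))·√(a² + 2c²) ≤ ((a − c)/2)·√(4a² − c²). -/
/-!
Put `u = √(ac)`, so `c ≤ u`. Multiplying by `a + c + 2u = (√a + √c)²` turns `(a - u)²` into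
`a (a - c)²`, and after squaring the claim follows from the polynomial inequality
`4a(a² + 2c²) ≤ (a + 3c)(4a² - c²)`, whose gap is `3c(4a + c)(a - c)`.
-/

namespace IsoscelesMedian

variable {a c : ℝ}

lemma four_mul_mul_le (hc : 0 ≤ c) (hca : c ≤ a) :
    4 * a * (a ^ 2 + 2 * c ^ 2) ≤ (a + 3 * c) * (4 * a ^ 2 - c ^ 2) := by
  have hgap : 0 ≤ c * (4 * a + c) * (a - c) :=
    mul_nonneg (mul_nonneg hc (by linarith)) (sub_nonneg.mpr hca)
  linear_combination 3 * hgap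

lemma le_sqrt_mul (hc : 0 ≤ c) (hca : c ≤ a) : c ≤ √(a * c) :=
  Real.le_sqrt_of_sq_le (by nlinarith)

/-- With `u = √(ac)` this is `(√a - √c)² (√a + √c)² = (a - c)²`, multiplied by `a`. -/
lemma sub_sq_mul_add_eq {u : ℝ} (hu : u ^ 2 = a * c) :
    (a - u) ^ 2 * (a + c + 2 * u) = a * (a - c) ^ 2 := by
  linear_combination (c - 3 * a + 2 * u) * hu

lemma sq_sub_sqrt_mul_mul_sqrt_le (hc : 0 < c) (hca : c ≤ a) :
    ((a - √(a * c)) * √(a ^ 2 + 2 * c ^ 2)) ^ 2 ≤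
      ((a - c) / 2 * √(4 * a ^ 2 - c ^ 2)) ^ 2 := by
  set u := √(a * c)
  have hcu : c ≤ u := le_sqrt_mul hc.le hca
  have hu : u ^ 2 = a * c := Real.sq_sqrt (by nlinarith)
  have hdiff : 0 ≤ 4 * a ^ 2 - c ^ 2 := by nlinarith
  have hpos : 0 < a + c + 2 * u := by linarith
  refine le_of_mul_le_mul_right ?_ hpos
  calc ((a - u) * √(a ^ 2 + 2 * c ^ 2)) ^ 2 * (a + c + 2 * u)
      = (a - c) ^ 2 / 4 * (4 * a * (a ^ 2 + 2 * c ^ 2)) := by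
        rw [mul_pow, Real.sq_sqrt (by positivity)]
        linear_combination (a ^ 2 + 2 * c ^ 2) * sub_sq_mul_add_eq hu
    _ ≤ (a - c) ^ 2 / 4 * ((a + 3 * c) * (4 * a ^ 2 - c ^ 2)) := by
        gcongr _ * ?_
        exact four_mul_mul_le hc.le hca
    _ ≤ (a - c) ^ 2 / 4 * ((a + c + 2 * u) * (4 * a ^ 2 - c ^ 2)) := by
        gcongr _ * (?_ * _)
        linarith
    _ = ((a - c) / 2 * √(4 * a ^ 2 - c ^ 2)) ^ 2 * (a + c + 2 * u) := by
        rw [mul_pow, Real.sq_sqrt hdiff]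
        ring

end IsoscelesMedian

theorem stmt5_general (a c : ℝ) (hc : 0 < c) (hca : c < a) :
    (a - Real.sqrt (a * c)) * Real.sqrt (a ^ 2 + 2 * c ^ 2) ≤
      ((a - c) / 2) * Real.sqrt (4 * a ^ 2 - c ^ 2) :=
  le_of_pow_le_pow_left₀ two_ne_zero
    (mul_nonneg (by linarith) (Real.sqrt_nonneg _))
    (IsoscelesMedian.sq_sub_sqrt_mul_mul_sqrt_le hc hca.le)

theorem stmt5 (a c : ℝ) (ha : 0 < a) (hc : 0 < c) (hca : c < a) :
    (a - Real.sqrt (a * c)) * Real.sqrt (a ^ 2 + 2 * c ^ 2) ≤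
      ((a - c) / 2) * Real.sqrt (4 * a ^ 2 - c ^ 2) :=
  stmt5_general a c hc hca
end

section
/- In any triangle with sides a, b, c, the quantity (a − √(bc))·m_a + (b − √(ac))·m_b + (c − √(ab))·m_c is nonpositive, with equality if and only if a = b = c. -/
private lemma pairkey (x y z : ℝ) (hx : 0 < x) (hy : 0 < y) (hz : 0 < z)
    (h1 : x < y + z) (h3 : z < x + y) (hyx : y ≤ x) :
    Real.sqrt (2*y^2+2*z^2-x^2) * (x+z) ≤ Real.sqrt (2*x^2+2*z^2-y^2) * (y+z) := by
  have hu : (0:ℝ) ≤ 2*y^2+2*z^2-x^2 := by nlinarith [sq_nonneg (y-z)]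
  have hv : (0:ℝ) ≤ 2*x^2+2*z^2-y^2 := by nlinarith [sq_nonneg (x-z)]
  have key : (2*y^2+2*z^2-x^2)*(x+z)^2 ≤ (2*x^2+2*z^2-y^2)*(y+z)^2 := by
    nlinarith [sq_nonneg (x-y), sq_nonneg (x+y-z), mul_pos hx hy, mul_pos hy hz,
      mul_pos hx hz, mul_pos (mul_pos hx hy) hz, sq_nonneg (x-z), sq_nonneg (y-z),
      mul_nonneg (mul_nonneg (sub_nonneg.2 hyx) (sub_nonneg.2 hyx)) hz.le,
      mul_nonneg (sub_nonneg.2 hyx) (sub_pos.2 h3).le,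
      mul_nonneg (mul_nonneg (sub_nonneg.2 hyx) (sub_pos.2 h3).le) (sub_pos.2 h1).le]
  calc Real.sqrt (2*y^2+2*z^2-x^2) * (x+z)
      = Real.sqrt ((2*y^2+2*z^2-x^2) * (x+z)^2) := by
        rw [Real.sqrt_mul hu, Real.sqrt_sq (by positivity)]
    _ ≤ Real.sqrt ((2*x^2+2*z^2-y^2) * (y+z)^2) := Real.sqrt_le_sqrt key
    _ = Real.sqrt (2*x^2+2*z^2-y^2) * (y+z) := by
        rw [Real.sqrt_mul hv, Real.sqrt_sq (by positivity)]

private lemma pairfull (x y z : ℝ) (hx : 0 < x) (hy : 0 < y) (hz : 0 < z)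
    (h1 : x < y + z) (h2 : y < x + z) (h3 : z < x + y) :
    (x - y) * (Real.sqrt (2*y^2+2*z^2-x^2) * (x+z) - Real.sqrt (2*x^2+2*z^2-y^2) * (y+z)) ≤ 0 := by
  rcases le_total y x with h | h
  · exact mul_nonpos_of_nonneg_of_nonpos (by linarith)
      (by linarith [pairkey x y z hx hy hz h1 h3 h])
  · have := pairkey y x z hy hx hz h2 (by linarith) h
    exact mul_nonpos_of_nonpos_of_nonneg (by linarith) (by linarith)

private lemma amgm2 (p q : ℝ) (hp : 0 < p) (hq : 0 < q) :
    2*p*q/(p+q) ≤ Real.sqrt (p*q) := by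
  rw [Real.le_sqrt (by positivity) (by positivity), div_pow, div_le_iff₀ (by positivity)]
  nlinarith [sq_nonneg (p-q), mul_pos hp hq]

private lemma amgm2' (p q : ℝ) (hp : 0 < p) (hq : 0 < q) (hne : p ≠ q) :
    2*p*q/(p+q) < Real.sqrt (p*q) := by
  have hsq : 0 < (p-q)^2 :=
    lt_of_le_of_ne (sq_nonneg _) (Ne.symm (pow_ne_zero 2 (sub_ne_zero.mpr hne)))
  rw [show (2*p*q/(p+q) : ℝ) = 2*p*q/(p+q) from rfl]
  rw [Real.lt_sqrt (by positivity), div_pow, div_lt_iff₀ (by positivity)]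
  nlinarith [mul_pos hp hq]

theorem stmt9 (a b c : ℝ) (ha : 0 < a) (hb : 0 < b) (hc : 0 < c)
    (hab : a < b + c) (hbc : b < a + c) (hca : c < a + b) :
    (a - Real.sqrt (b * c)) * ((1 / 2) * Real.sqrt (2 * b ^ 2 + 2 * c ^ 2 - a ^ 2)) +
      (b - Real.sqrt (a * c)) * ((1 / 2) * Real.sqrt (2 * a ^ 2 + 2 * c ^ 2 - b ^ 2)) +
      (c - Real.sqrt (a * b)) * ((1 / 2) * Real.sqrt (2 * a ^ 2 + 2 * b ^ 2 - c ^ 2)) ≤ 0 ∧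
    ((a - Real.sqrt (b * c)) * ((1 / 2) * Real.sqrt (2 * b ^ 2 + 2 * c ^ 2 - a ^ 2)) +
      (b - Real.sqrt (a * c)) * ((1 / 2) * Real.sqrt (2 * a ^ 2 + 2 * c ^ 2 - b ^ 2)) +
      (c - Real.sqrt (a * b)) * ((1 / 2) * Real.sqrt (2 * a ^ 2 + 2 * b ^ 2 - c ^ 2)) = 0 ↔
      a = b ∧ b = c) := by
  -- key pair inequalities
  have key1 := pairfull a b c ha hb hc hab hbc hca
  have key2 := pairfull a c b ha hc hb (by linarith) (by linarith) (by linarith)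
  have key3 := pairfull b c a hb hc ha (by linarith) (by linarith) (by linarith)
  rw [show (2*c^2+2*b^2-a^2 : ℝ) = 2*b^2+2*c^2-a^2 by ring,
      show (2*a^2+2*b^2-c^2 : ℝ) = 2*a^2+2*b^2-c^2 by ring] at key2
  rw [show (2*c^2+2*a^2-b^2 : ℝ) = 2*a^2+2*c^2-b^2 by ring,
      show (2*b^2+2*a^2-c^2 : ℝ) = 2*a^2+2*b^2-c^2 by ring] at key3
  set u := Real.sqrt (2*b^2+2*c^2-a^2) with hu_def
  set v := Real.sqrt (2*a^2+2*c^2-b^2) with hv_def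
  set w := Real.sqrt (2*a^2+2*b^2-c^2) with hw_def
  have hu : 0 < u := Real.sqrt_pos.mpr (by nlinarith [sq_nonneg (b-c)])
  have hv : 0 < v := Real.sqrt_pos.mpr (by nlinarith [sq_nonneg (a-c)])
  have hw : 0 < w := Real.sqrt_pos.mpr (by nlinarith [sq_nonneg (a-b)])
  -- the "T ≤ 0" part
  have h1' : (a+b)*c*((a-b)*(u*(a+c) - v*(b+c))) ≤ 0 :=
    mul_nonpos_of_nonneg_of_nonpos (by positivity) key1
  have h2' : (a+c)*b*((a-c)*(u*(a+b) - w*(c+b))) ≤ 0 :=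
    mul_nonpos_of_nonneg_of_nonpos (by positivity) key2
  have h3' : (b+c)*a*((b-c)*(v*(b+a) - w*(c+a))) ≤ 0 :=
    mul_nonpos_of_nonneg_of_nonpos (by positivity) key3
  have hD : (0:ℝ) < (a+b)*((b+c)*(a+c)) := by positivity
  have identity : ((a - 2*b*c/(b+c))*u + (b - 2*a*c/(a+c))*v + (c - 2*a*b/(a+b))*w)
      * ((a+b)*((b+c)*(a+c)))
      = (a+b)*c*((a-b)*(u*(a+c) - v*(b+c))) + (a+c)*b*((a-c)*(u*(a+b) - w*(c+b)))
        + (b+c)*a*((b-c)*(v*(b+a) - w*(c+a))) := by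
    field_simp
    ring
  have hT : (a - 2*b*c/(b+c))*u + (b - 2*a*c/(a+c))*v + (c - 2*a*b/(a+b))*w ≤ 0 := by
    have hprod : ((a - 2*b*c/(b+c))*u + (b - 2*a*c/(a+c))*v + (c - 2*a*b/(a+b))*w)
        * ((a+b)*((b+c)*(a+c))) ≤ 0 := by rw [identity]; linarith
    exact le_of_not_gt fun h => absurd hprod (not_le.mpr (mul_pos h hD))
  -- AM-GM bounds
  have g1 : 2*b*c/(b+c) ≤ Real.sqrt (b*c) := amgm2 b c hb hc
  have g2 : 2*a*c/(a+c) ≤ Real.sqrt (a*c) := amgm2 a c ha hc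
  have g3 : 2*a*b/(a+b) ≤ Real.sqrt (a*b) := amgm2 a b ha hb
  have e1 : (a - Real.sqrt (b*c))*u ≤ (a - 2*b*c/(b+c))*u :=
    mul_le_mul_of_nonneg_right (by linarith) hu.le
  have e2 : (b - Real.sqrt (a*c))*v ≤ (b - 2*a*c/(a+c))*v :=
    mul_le_mul_of_nonneg_right (by linarith) hv.le
  have e3 : (c - Real.sqrt (a*b))*w ≤ (c - 2*a*b/(a+b))*w :=
    mul_le_mul_of_nonneg_right (by linarith) hw.le
  have hrw : (a - Real.sqrt (b * c)) * ((1 / 2) * u) +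
      (b - Real.sqrt (a * c)) * ((1 / 2) * v) +
      (c - Real.sqrt (a * b)) * ((1 / 2) * w)
      = (1/2) * ((a - Real.sqrt (b*c))*u + (b - Real.sqrt (a*c))*v
          + (c - Real.sqrt (a*b))*w) := by ring
  have main : (a - Real.sqrt (b * c)) * ((1 / 2) * u) +
      (b - Real.sqrt (a * c)) * ((1 / 2) * v) +
      (c - Real.sqrt (a * b)) * ((1 / 2) * w) ≤ 0 := by
    rw [hrw]; linarith
  refine ⟨main, ?_, ?_⟩
  · -- equality → a = b ∧ b = c
    intro h0
    rw [hrw] at h0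
    by_contra hne
    have hsum0 : (a - Real.sqrt (b*c))*u + (b - Real.sqrt (a*c))*v
        + (c - Real.sqrt (a*b))*w = 0 := by linarith
    rcases Decidable.not_and_iff_or_not.mp hne with h | h
    · -- a ≠ b : strict in the third AM-GM term
      have g3' : 2*a*b/(a+b) < Real.sqrt (a*b) := amgm2' a b ha hb h
      have e3' : (c - Real.sqrt (a*b))*w < (c - 2*a*b/(a+b))*w :=
        mul_lt_mul_of_pos_right (by linarith) hw
      linarith
    · -- b ≠ c : strict in the first AM-GM term
      have g1' : 2*b*c/(b+c) < Real.sqrt (b*c) := amgm2' b c hb hc h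
      have e1' : (a - Real.sqrt (b*c))*u < (a - 2*b*c/(b+c))*u :=
        mul_lt_mul_of_pos_right (by linarith) hu
      linarith
  · -- a = b ∧ b = c → equality
    rintro ⟨rfl, rfl⟩
    rw [hu_def, hv_def, hw_def, Real.sqrt_mul_self ha.le]
    ring
end

section
/- Define F(x,y) = (1 − √(xy))·√(2x² + 2y² − 1) + (x − √y)·√(2 + 2y² − x²) + (y − √x)·√(2 + 2x² − y²) on the set M = {(x,y) : 0 ≤ y ≤ x ≤ 1, x + y ≥ 1}. Then F(x,y) ≤ 0 for all (x,y) ∈ M. -/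
set_option maxHeartbeats 1000000

lemma keypoly (u v : ℝ) (hv : 0 ≤ v) (hg2 : 0 ≤ u - v) (hg3 : 0 ≤ 1 - u) (hg4 : 0 ≤ u^2+v^2-1) :
    (1+u^2+v^2-u*v-u-v)*(1+v^2)*((1+u^2+2*v^2)*(2+u^2+v^2)) ≤
      3*(1-u^4)*(1-u*v)*(2+u^2+v^2) + 3*(u^4-v^4)*(u-v^2)*(1+u^2+2*v^2) := by
  linarith [(mul_nonneg hg2 (sq_nonneg (1-u))),
    (mul_nonneg (mul_nonneg hg2 hg2) (sq_nonneg (v^2))),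
    (mul_nonneg hg3 (sq_nonneg (u-v))),
    (mul_nonneg (mul_nonneg hv hg3) (sq_nonneg (u^2-v^2))),
    (mul_nonneg (mul_nonneg hg2 hg3) (sq_nonneg (u-v^2))),
    (mul_nonneg (mul_nonneg hg3 hg4) (sq_nonneg (1-v^2))),
    (mul_nonneg (mul_nonneg hg3 hg4) (sq_nonneg (1-u^2))),
    (mul_nonneg (mul_nonneg hg4 hg4) (sq_nonneg (1-v^2))),
    (mul_nonneg (mul_nonneg (mul_nonneg hv hg2) hg4) (sq_nonneg (u*v-1))),
    (mul_nonneg (mul_nonneg hg2 hg2) (sq_nonneg (1-u))),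
    (mul_nonneg (mul_nonneg hg2 hg4) (sq_nonneg (1-v^2))),
    (mul_nonneg (mul_nonneg hv hg2) (sq_nonneg (1-u^2))),
    (mul_nonneg (mul_nonneg hv hg3) (sq_nonneg (1-v^2))),
    (mul_nonneg (mul_nonneg hg3 hg4) (sq_nonneg (u^2-v^2))),
    (mul_nonneg (mul_nonneg hg3 hg4) (sq_nonneg (u*v-1))),
    (mul_nonneg (mul_nonneg (mul_nonneg hv hg3) hg4) (sq_nonneg (u*v-1))),
    (mul_nonneg (mul_nonneg hv hg2) (sq_nonneg (1-u))),
    (mul_nonneg (mul_nonneg hg2 hg4) (sq_nonneg (1-u))),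
    (mul_nonneg (mul_nonneg (mul_nonneg hv hg3) hg4) (sq_nonneg (u^2-v^2))),
    (mul_nonneg (mul_nonneg hg2 hg3) (sq_nonneg (1-u^2))),
    (mul_nonneg (mul_nonneg hv hg3) (sq_nonneg (u*v-1))),
    (mul_nonneg (mul_nonneg hv hg4) (sq_nonneg (u^2-v^2))),
    (mul_nonneg hg3 (sq_nonneg (1-u^2))),
    (mul_nonneg (mul_nonneg hg2 hg4) (sq_nonneg (1-u^2))),
    (mul_nonneg hv (sq_nonneg (1-u^2))),
    (mul_nonneg (mul_nonneg hv hg4) (sq_nonneg (1-v))),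
    (mul_nonneg (mul_nonneg hg3 hg3) (sq_nonneg (u*v-1))),
    (mul_nonneg (mul_nonneg (mul_nonneg hv hg2) hg4) (sq_nonneg (1-u^2))),
    (mul_nonneg (mul_nonneg hv hg2) (sq_nonneg (u-v))),
    (mul_nonneg hg4 (sq_nonneg (u^2-v^2))),
    (mul_nonneg (mul_nonneg hg2 hg4) (sq_nonneg (u*v-1))),
    (mul_nonneg (mul_nonneg hv hg4) (sq_nonneg (1-u))),
    (mul_nonneg (mul_nonneg hg2 hg2) (sq_nonneg (u*v))),
    (mul_nonneg (mul_nonneg hv hg3) (sq_nonneg (u-v))),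
    (mul_nonneg (mul_nonneg (mul_nonneg hv hg2) hg4) (sq_nonneg (u^2-v^2))),
    (mul_nonneg (mul_nonneg hv hg3) (sq_nonneg (1-u)))]

lemma main_alg (u v A B C : ℝ)
    (hv0 : 0 ≤ v) (huv : v ≤ u) (hu1 : u ≤ 1) (hsum : 1 ≤ u^2+v^2)
    (hA0 : 0 ≤ A) (hB0 : 0 ≤ B) (hC0 : 0 ≤ C)
    (hA2 : A^2 = 2*(u^2)^2 + 2*(v^2)^2 - 1)
    (hB2 : B^2 = 2 + 2*(v^2)^2 - (u^2)^2)
    (hC2 : C^2 = 2 + 2*(u^2)^2 - (v^2)^2) :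
    (1 - u*v)*A + (u^2 - v)*B + (v^2 - u)*C ≤ 0 := by
  have hu0 : 0 ≤ u := le_trans hv0 huv
  have huv1 : u*v ≤ 1 := by nlinarith
  have hs : 0 ≤ 1+u^2+v^2-u*v-u-v := by
    nlinarith [sq_nonneg (u-v), sq_nonneg (1-u), sq_nonneg (1-v)]
  have huy : 0 ≤ u - v^2 := by nlinarith
  have hu21 : u^2 ≤ 1 := by nlinarith
  have hv4u4 : v^4 ≤ u^4 := pow_le_pow_left₀ hv0 huv 4
  -- upper bounds
  have hAle : A ≤ u^2+v^2 := by
    refine le_of_pow_le_pow_left₀ two_ne_zero (by positivity) ?_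
    have h01 : 0 ≤ u^2 - v^2 := by nlinarith
    nlinarith [hA2, mul_nonneg h01 (show 0 ≤ 1 - (u^2 - v^2) by nlinarith)]
  have hBle : B ≤ 1+v^2 := by
    refine le_of_pow_le_pow_left₀ two_ne_zero (by positivity) ?_
    nlinarith [hB2, mul_nonneg (show 0 ≤ u^2+v^2-1 by linarith) (show 0 ≤ u^2-v^2+1 by nlinarith)]
  have hCle : C ≤ 1+u^2 := by
    refine le_of_pow_le_pow_left₀ two_ne_zero (by positivity) ?_
    nlinarith [hC2, mul_nonneg (show 0 ≤ u^2+v^2-1 by linarith) (show 0 ≤ v^2-u^2+1 by nlinarith)]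
  have hAB : A ≤ B := by
    refine le_of_pow_le_pow_left₀ two_ne_zero hB0 ?_
    nlinarith [hA2, hB2, hu21, sq_nonneg u]
  have hBC : B ≤ C := by
    refine le_of_pow_le_pow_left₀ two_ne_zero hC0 ?_
    rw [hB2, hC2]; nlinarith [hv4u4]
  -- difference of squares identities
  have e1 : B^2 - A^2 = 3*(1-(u^2)^2) := by rw [hA2, hB2]; ring
  have e2 : C^2 - B^2 = 3*((u^2)^2-(v^2)^2) := by rw [hB2, hC2]; ring
  have hq1core : 3*(1-(u^2)^2) ≤ (B-A)*(1+u^2+2*v^2) := by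
    nlinarith [e1, mul_nonneg (sub_nonneg.2 hAB) (show 0 ≤ 1+u^2+2*v^2-(A+B) by linarith)]
  have hq2core : 3*((u^2)^2-(v^2)^2) ≤ (C-B)*(2+u^2+v^2) := by
    nlinarith [e2, mul_nonneg (sub_nonneg.2 hBC) (show 0 ≤ 2+u^2+v^2-(B+C) by linarith)]
  have hD1 : (0:ℝ) < 1+u^2+2*v^2 := by positivity
  have hD2 : (0:ℝ) < 2+u^2+v^2 := by positivity
  have hq0 : 0 ≤ (1+u^2+v^2-u*v-u-v) * ((1+v^2) - B) * ((1+u^2+2*v^2)*(2+u^2+v^2)) := by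
    apply mul_nonneg (mul_nonneg hs (by linarith)) (by positivity)
  have hq1 : 0 ≤ (1-u*v) * ((B-A)*(1+u^2+2*v^2) - 3*(1-(u^2)^2)) * (2+u^2+v^2) := by
    apply mul_nonneg (mul_nonneg (by linarith) (by linarith)) (by positivity)
  have hq2 : 0 ≤ (u-v^2) * ((C-B)*(2+u^2+v^2) - 3*((u^2)^2-(v^2)^2)) * (1+u^2+2*v^2) := by
    apply mul_nonneg (mul_nonneg huy (by linarith)) (by positivity)
  have hpoly := keypoly u v hv0 (by linarith) (by linarith) (by linarith)
  have hGD : ((1 - u*v)*A + (u^2 - v)*B + (v^2 - u)*C) * ((1+u^2+2*v^2)*(2+u^2+v^2)) ≤ 0 := by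
    linarith [hq0, hq1, hq2, hpoly]
  by_contra hcon
  push_neg at hcon
  nlinarith [mul_pos hcon (mul_pos hD1 hD2), hGD]

theorem stmt10 (x y : ℝ) (h1 : 0 ≤ y) (h2 : y ≤ x) (h3 : x ≤ 1) (h4 : 1 ≤ x + y) :
    (1 - Real.sqrt (x * y)) * Real.sqrt (2 * x ^ 2 + 2 * y ^ 2 - 1) +
      (x - Real.sqrt y) * Real.sqrt (2 + 2 * y ^ 2 - x ^ 2) +
      (y - Real.sqrt x) * Real.sqrt (2 + 2 * x ^ 2 - y ^ 2) ≤ 0 := by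
  have hx0 : 0 ≤ x := le_trans h1 h2
  have hu2 : Real.sqrt x ^ 2 = x := Real.sq_sqrt hx0
  have hv2 : Real.sqrt y ^ 2 = y := Real.sq_sqrt h1
  have hA2 : Real.sqrt (2 * x ^ 2 + 2 * y ^ 2 - 1) ^ 2 = 2 * x ^ 2 + 2 * y ^ 2 - 1 :=
    Real.sq_sqrt (by nlinarith [sq_nonneg (x-y)])
  have hB2 : Real.sqrt (2 + 2 * y ^ 2 - x ^ 2) ^ 2 = 2 + 2 * y ^ 2 - x ^ 2 :=
    Real.sq_sqrt (by nlinarith)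
  have hC2 : Real.sqrt (2 + 2 * x ^ 2 - y ^ 2) ^ 2 = 2 + 2 * x ^ 2 - y ^ 2 :=
    Real.sq_sqrt (by nlinarith)
  have key := main_alg (Real.sqrt x) (Real.sqrt y)
    (Real.sqrt (2 * x ^ 2 + 2 * y ^ 2 - 1)) (Real.sqrt (2 + 2 * y ^ 2 - x ^ 2))
    (Real.sqrt (2 + 2 * x ^ 2 - y ^ 2))
    (Real.sqrt_nonneg y) (Real.sqrt_le_sqrt h2) (Real.sqrt_le_one.mpr h3)
    (by rw [hu2, hv2]; linarith)
    (Real.sqrt_nonneg _) (Real.sqrt_nonneg _) (Real.sqrt_nonneg _)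
    (by rw [hu2, hv2, hA2]) (by rw [hu2, hv2, hB2]) (by rw [hu2, hv2, hC2])
  rw [hu2, hv2] at key
  rw [Real.sqrt_mul hx0]
  exact key
end

section
/- For F(x,y) = (1 − √(xy))·√(2x² + 2y² − 1) + (x − √y)·√(2 + 2y² − x²) + (y − √x)·√(2 + 2x² − y²) restricted to the boundary segment {(x, 1−x) : 1/2 ≤ x ≤ 1}, we have F(x, 1−x) ≤ 0. -/
/-!
On the segment `x + y = 1` the three radicands are perfect squares: `2x² + 2y² - 1 = (x - y)²`,
`2 + 2y² - x² = (1 + y)²` and `2 + 2x² - y² = (1 + x)²`. With `a = √x`, `b = √y` the expression becomes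
`(1 - ab)(x - y) + (x - b)(1 + y) + (y - a)(1 + x) = 4x - 2x² - ab(x - y) - b(1 + y) - a(1 + x)`,
and the bounds `ab(x - y) ≥ 0`, `a ≥ x` and `b(1 + y) ≥ 3xy` make it at most
`4x - 2x² - x(1 + x) - 3x(1 - x) = 0`.
-/

namespace Real

theorem sqrt_two_mul_sq_add_two_mul_sq_sub_one {x y : ℝ} (hxy : x + y = 1) (hyx : y ≤ x) :
    √(2 * x ^ 2 + 2 * y ^ 2 - 1) = x - y := by
  rw [show 2 * x ^ 2 + 2 * y ^ 2 - 1 = (x - y) ^ 2 by linear_combination (x + y + 1) * hxy]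
  exact sqrt_sq (by linarith)

theorem sqrt_two_add_two_mul_sq_sub_sq {x y : ℝ} (hxy : x + y = 1) (hy : -1 ≤ y) :
    √(2 + 2 * y ^ 2 - x ^ 2) = 1 + y := by
  rw [show 2 + 2 * y ^ 2 - x ^ 2 = (1 + y) ^ 2 by linear_combination (y - x - 1) * hxy]
  exact sqrt_sq (by linarith)

theorem three_mul_mul_one_sub_le_sqrt_one_sub_mul {x : ℝ} (h1 : 1 / 2 ≤ x) (h2 : x ≤ 1) :
    3 * x * (1 - x) ≤ √(1 - x) * (2 - x) := by
  set b := √(1 - x)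
  have hb0 : 0 ≤ b := sqrt_nonneg _
  have hb2 : b ^ 2 = 1 - x := sq_sqrt (by linarith)
  -- `b ≤ b² + 1/4` and `12x² - 19x + 8 > 0` give `3xb ≤ 3x(5/4 - x) ≤ 2 - x`
  have hb : 3 * x * b ≤ 2 - x := by nlinarith [sq_nonneg (b - 1 / 2), sq_nonneg (x - 19 / 24)]
  nlinarith [mul_le_mul_of_nonneg_left hb hb0]

end Real

open Real

theorem boundary_sum_nonpos {x : ℝ} (h1 : 1 / 2 ≤ x) (h2 : x ≤ 1) :
    (1 - √x * √(1 - x)) * (x - (1 - x)) + (x - √(1 - x)) * (1 + (1 - x)) +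
      ((1 - x) - √x) * (1 + x) ≤ 0 := by
  have hx0 : 0 ≤ x := by linarith
  have hab : 0 ≤ √x * √(1 - x) * (x - (1 - x)) :=
    mul_nonneg (mul_nonneg (sqrt_nonneg _) (sqrt_nonneg _)) (by linarith)
  have ha : x * (1 + x) ≤ √x * (1 + x) :=
    mul_le_mul_of_nonneg_right ((le_sqrt hx0 hx0).2 (by nlinarith)) (by linarith)
  have hb := three_mul_mul_one_sub_le_sqrt_one_sub_mul h1 h2
  linear_combination hab + ha + hb

theorem stmt13 (x : ℝ) (h1 : 1 / 2 ≤ x) (h2 : x ≤ 1) :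
    (1 - Real.sqrt (x * (1 - x))) * Real.sqrt (2 * x ^ 2 + 2 * (1 - x) ^ 2 - 1) +
      (x - Real.sqrt (1 - x)) * Real.sqrt (2 + 2 * (1 - x) ^ 2 - x ^ 2) +
      ((1 - x) - Real.sqrt x) * Real.sqrt (2 + 2 * x ^ 2 - (1 - x) ^ 2) ≤ 0 := by
  have hxy : x + (1 - x) = 1 := by ring
  rw [sqrt_mul (by linarith), sqrt_two_mul_sq_add_two_mul_sq_sub_one hxy (by linarith),
    sqrt_two_add_two_mul_sq_sub_sq hxy (by linarith),
    sqrt_two_add_two_mul_sq_sub_sq ((add_comm _ _).trans hxy) (by linarith)]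
  exact boundary_sum_nonpos h1 h2
end

section
/- For F(x,y) as above restricted to the diagonal y = x with 1/2 ≤ x ≤ 1, we have F(x,x) = (1 − x)·√(4x² − 1) + 2(x − √x)·√(x² + 2) ≤ 0. -/
/-!
Writing `s = √x`, the expression factors as `(1 - s) * ((1 + s) √(4x² - 1) - 2 s √(x² + 2))`.
The first factor is nonnegative and the second is nonpositive: after squaring, the needed inequality
`(1 + s)² (4 s⁴ - 1) ≤ 4 s² (s⁴ + 2)` has difference `(1 - s)(8 s⁴ + 12 s³ + 12 s² + 3 s + 1)`.
-/

open Real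

lemma sq_one_add_mul_le {s : ℝ} (hs0 : 0 ≤ s) (hs1 : s ≤ 1) :
    (1 + s) ^ 2 * (4 * s ^ 4 - 1) ≤ (2 * s) ^ 2 * (s ^ 4 + 2) := by
  have hdiff : (2 * s) ^ 2 * (s ^ 4 + 2) - (1 + s) ^ 2 * (4 * s ^ 4 - 1) =
      (1 - s) * (8 * s ^ 4 + 12 * s ^ 3 + 12 * s ^ 2 + 3 * s + 1) := by ring
  have hprod : 0 ≤ (1 - s) * (8 * s ^ 4 + 12 * s ^ 3 + 12 * s ^ 2 + 3 * s + 1) :=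
    mul_nonneg (by linarith) (by positivity)
  linarith

lemma one_add_sqrt_mul_sqrt_le {x : ℝ} (hx0 : 0 ≤ x) (hx1 : x ≤ 1) :
    (1 + √x) * √(4 * x ^ 2 - 1) ≤ 2 * √x * √(x ^ 2 + 2) := by
  set s := √x
  have hx : x = s ^ 2 := (sq_sqrt hx0).symm
  have hs0 : 0 ≤ s := sqrt_nonneg x
  have hs1 : s ≤ 1 := sqrt_le_one.mpr hx1
  calc (1 + s) * √(4 * x ^ 2 - 1)
      = √((1 + s) ^ 2 * (4 * s ^ 4 - 1)) := by
        rw [sqrt_mul (by positivity), sqrt_sq (by positivity), hx]; ring_nf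
    _ ≤ √((2 * s) ^ 2 * (s ^ 4 + 2)) := sqrt_le_sqrt (sq_one_add_mul_le hs0 hs1)
    _ = 2 * s * √(x ^ 2 + 2) := by
        rw [sqrt_mul (by positivity), sqrt_sq (by positivity), hx]; ring_nf

lemma one_sub_mul_add_sub_sqrt_mul_eq {x : ℝ} (hx0 : 0 ≤ x) (A B : ℝ) :
    (1 - x) * A + 2 * (x - √x) * B = (1 - √x) * ((1 + √x) * A - 2 * √x * B) := by
  nth_rewrite 1 [← sq_sqrt hx0]
  nth_rewrite 2 [← sq_sqrt hx0]
  ring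

theorem stmt14 (x : ℝ) (h1 : 1 / 2 ≤ x) (h2 : x ≤ 1) :
    (1 - Real.sqrt (x * x)) * Real.sqrt (2 * x ^ 2 + 2 * x ^ 2 - 1) +
      (x - Real.sqrt x) * Real.sqrt (2 + 2 * x ^ 2 - x ^ 2) +
      (x - Real.sqrt x) * Real.sqrt (2 + 2 * x ^ 2 - x ^ 2) =
      (1 - x) * Real.sqrt (4 * x ^ 2 - 1) + 2 * (x - Real.sqrt x) * Real.sqrt (x ^ 2 + 2) ∧
    (1 - x) * Real.sqrt (4 * x ^ 2 - 1) + 2 * (x - Real.sqrt x) * Real.sqrt (x ^ 2 + 2) ≤ 0 := by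
  have hx0 : 0 ≤ x := by linarith
  constructor
  · rw [sqrt_mul_self hx0]
    ring_nf
  · rw [one_sub_mul_add_sub_sqrt_mul_eq hx0]
    exact mul_nonpos_of_nonneg_of_nonpos (by linarith [sqrt_le_one.mpr h2])
      (by linarith [one_add_sqrt_mul_sqrt_le hx0 h2])
end

section
/- For F(x,y) as above restricted to the edge x = 1 with 0 ≤ y ≤ 1, we have F(1,y) = (1 − √y)·√(2y² + 1) + (1 − √y)·√(2y² + 1) + (y − 1)·√(4 − y²) ≤ 0. -/
/-!
Put `s = √y ∈ [0, 1]`. Since `1 - y = (1 - s)(1 + s)`, the value on the edge factors as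
`(1 - s) * (2√(2s⁴ + 1) - (1 + s)√(4 - s⁴))`, and after squaring the second factor is
nonpositive because `(1 + s)²(4 - s⁴) - 4(2s⁴ + 1) = s(1 - s)(s⁴ + 3s³ + 12s² + 12s + 8) ≥ 0`.
-/

open Real

lemma one_add_sq_mul_sub_eq (s : ℝ) :
    (1 + s) ^ 2 * (4 - s ^ 4) - 2 ^ 2 * (2 * s ^ 4 + 1) =
      s * (1 - s) * (s ^ 4 + 3 * s ^ 3 + 12 * s ^ 2 + 12 * s + 8) := by
  ring

lemma two_mul_sqrt_le_one_add_mul_sqrt {s : ℝ} (hs0 : 0 ≤ s) (hs1 : s ≤ 1) :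
    2 * √(2 * s ^ 4 + 1) ≤ (1 + s) * √(4 - s ^ 4) := by
  have hsq : 2 ^ 2 * (2 * s ^ 4 + 1) ≤ (1 + s) ^ 2 * (4 - s ^ 4) := by
    have : 0 ≤ s * (1 - s) * (s ^ 4 + 3 * s ^ 3 + 12 * s ^ 2 + 12 * s + 8) := by
      have : 0 ≤ 1 - s := by linarith
      positivity
    linarith [one_add_sq_mul_sub_eq s]
  have h := sqrt_le_sqrt hsq
  rwa [sqrt_mul (sq_nonneg _), sqrt_mul (sq_nonneg _), sqrt_sq zero_le_two,
    sqrt_sq (by linarith)] at h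

theorem stmt15 (y : ℝ) (h0 : 0 ≤ y) (h1 : y ≤ 1) :
    (1 - Real.sqrt (1 * y)) * Real.sqrt (2 * 1 ^ 2 + 2 * y ^ 2 - 1) +
      (1 - Real.sqrt y) * Real.sqrt (2 + 2 * y ^ 2 - 1 ^ 2) +
      (y - Real.sqrt 1) * Real.sqrt (2 + 2 * 1 ^ 2 - y ^ 2) =
      (1 - Real.sqrt y) * Real.sqrt (2 * y ^ 2 + 1) + (1 - Real.sqrt y) * Real.sqrt (2 * y ^ 2 + 1) +
        (y - 1) * Real.sqrt (4 - y ^ 2) ∧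
    (1 - Real.sqrt y) * Real.sqrt (2 * y ^ 2 + 1) + (1 - Real.sqrt y) * Real.sqrt (2 * y ^ 2 + 1) +
      (y - 1) * Real.sqrt (4 - y ^ 2) ≤ 0 := by
  refine ⟨by rw [one_mul, sqrt_one]; ring_nf, ?_⟩
  have hy : y = √y ^ 2 := (sq_sqrt h0).symm
  have hs1 : √y ≤ 1 := sqrt_le_one.mpr h1
  set s := √y
  have hfactor : (1 - s) * √(2 * y ^ 2 + 1) + (1 - s) * √(2 * y ^ 2 + 1) +
      (y - 1) * √(4 - y ^ 2) =
      (1 - s) * (2 * √(2 * s ^ 4 + 1) - (1 + s) * √(4 - s ^ 4)) := by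
    rw [hy]; ring_nf
  rw [hfactor]
  exact mul_nonpos_of_nonneg_of_nonpos (by linarith)
    (by linarith [two_mul_sqrt_le_one_add_mul_sqrt (sqrt_nonneg y) hs1])
end

section
/- In any triangle with sides a, b, c, semiperimeter p = (a+b+c)/2, and medians m_a, m_b, m_c, we have (2p − 3a)·m_a + (2p − 3b)·m_b + (2p − 3c)·m_c ≥ 0. -/
/-!
Writing `M_a = √(2b² + 2c² - a²)` (twice the median), `2p - 3a = (b - a) + (c - a)`, so the sum
regroups as `Σ_{pairs} (b - a)(M_a - M_b)`. Each term is nonnegative because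
`M_a² - M_b² = 3(b² - a²)`: the longer side has the shorter median.
-/

lemma mul_sub_sqrt_nonneg_of_mul_sub_nonneg {t X Y : ℝ} (h : 0 ≤ t * (X - Y)) :
    0 ≤ t * (√X - √Y) := by
  rcases mul_nonneg_iff.1 h with ⟨ht, hXY⟩ | ⟨ht, hXY⟩
  · exact mul_nonneg ht (sub_nonneg.2 (Real.sqrt_le_sqrt (sub_nonneg.1 hXY)))
  · exact mul_nonneg_of_nonpos_of_nonpos ht (sub_nonpos.2 (Real.sqrt_le_sqrt (sub_nonpos.1 hXY)))

lemma sub_mul_sqrt_median_sub_nonneg {a b : ℝ} (c : ℝ) (h : 0 ≤ a + b) :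
    0 ≤ (b - a) * (√(2 * b ^ 2 + 2 * c ^ 2 - a ^ 2) - √(2 * a ^ 2 + 2 * c ^ 2 - b ^ 2)) := by
  refine mul_sub_sqrt_nonneg_of_mul_sub_nonneg ?_
  have key : (b - a) * ((2 * b ^ 2 + 2 * c ^ 2 - a ^ 2) - (2 * a ^ 2 + 2 * c ^ 2 - b ^ 2))
      = 3 * (b - a) ^ 2 * (a + b) := by ring
  rw [key]
  positivity

theorem stmt16_general (a b c : ℝ) (ha : 0 < a) (hb : 0 < b) (hc : 0 < c) :
    0 ≤ (2 * ((a + b + c) / 2) - 3 * a) * ((1 / 2) * Real.sqrt (2 * b ^ 2 + 2 * c ^ 2 - a ^ 2)) +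
      (2 * ((a + b + c) / 2) - 3 * b) * ((1 / 2) * Real.sqrt (2 * a ^ 2 + 2 * c ^ 2 - b ^ 2)) +
      (2 * ((a + b + c) / 2) - 3 * c) * ((1 / 2) * Real.sqrt (2 * a ^ 2 + 2 * b ^ 2 - c ^ 2)) := by
  have hab := sub_mul_sqrt_median_sub_nonneg c (by linarith : 0 ≤ a + b)
  have hac := sub_mul_sqrt_median_sub_nonneg b (by linarith : 0 ≤ a + c)
  have hbc := sub_mul_sqrt_median_sub_nonneg a (by linarith : 0 ≤ b + c)
  -- `ring_nf` also normalizes the arguments of the square roots, so the atoms match up.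
  ring_nf at hab hac hbc ⊢
  linarith

theorem stmt16 (a b c : ℝ) (ha : 0 < a) (hb : 0 < b) (hc : 0 < c)
    (hab : a < b + c) (hbc : b < a + c) (hca : c < a + b) :
    0 ≤ (2 * ((a + b + c) / 2) - 3 * a) * ((1 / 2) * Real.sqrt (2 * b ^ 2 + 2 * c ^ 2 - a ^ 2)) +
      (2 * ((a + b + c) / 2) - 3 * b) * ((1 / 2) * Real.sqrt (2 * a ^ 2 + 2 * c ^ 2 - b ^ 2)) +
      (2 * ((a + b + c) / 2) - 3 * c) * ((1 / 2) * Real.sqrt (2 * a ^ 2 + 2 * b ^ 2 - c ^ 2)) :=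
  stmt16_general a b c ha hb hc
end

section
/- In any triangle with sides a ≥ b ≥ c and medians m_a, m_c, we have m_a/m_c ≤ (√(ab) + √(ac) + √(bc))/(a + b + c) ≤ 1. -/
lemma amgm_aux (x y : ℝ) (hx : 0 ≤ x) (hy : 0 ≤ y) :
    Real.sqrt (x * y) ≤ (x + y) / 2 := by
  have h := Real.sqrt_le_sqrt (show x * y ≤ ((x + y) / 2) ^ 2 by nlinarith [sq_nonneg (x - y)])
  rwa [Real.sqrt_sq (by positivity)] at h

lemma le_sqrt_aux (x y : ℝ) (hx : 0 ≤ x) (hxy : x ≤ y) : x ≤ Real.sqrt (x * y) := by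
  calc x = Real.sqrt (x ^ 2) := (Real.sqrt_sq hx).symm
    _ ≤ Real.sqrt (x * y) := Real.sqrt_le_sqrt (by nlinarith)

theorem stmt18 (a b c : ℝ) (ha : 0 < a) (hb : 0 < b) (hc : 0 < c)
    (hab : b ≤ a) (hbc : c ≤ b)
    (h1 : a < b + c) (h2 : b < a + c) (h3 : c < a + b) :
    ((1 / 2) * Real.sqrt (2 * b ^ 2 + 2 * c ^ 2 - a ^ 2)) /
        ((1 / 2) * Real.sqrt (2 * a ^ 2 + 2 * b ^ 2 - c ^ 2)) ≤
      (Real.sqrt (a * b) + Real.sqrt (a * c) + Real.sqrt (b * c)) / (a + b + c) ∧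
    (Real.sqrt (a * b) + Real.sqrt (a * c) + Real.sqrt (b * c)) / (a + b + c) ≤ 1 := by
  have hca : c ≤ a := le_trans hbc hab
  have hA : (0:ℝ) ≤ 2 * b ^ 2 + 2 * c ^ 2 - a ^ 2 := by nlinarith [sq_nonneg (b - c)]
  have hC : (0:ℝ) < 2 * a ^ 2 + 2 * b ^ 2 - c ^ 2 := by nlinarith [sq_nonneg (a - b)]
  have hsC : 0 < Real.sqrt (2 * a ^ 2 + 2 * b ^ 2 - c ^ 2) := Real.sqrt_pos.mpr hC
  have hsab : b ≤ Real.sqrt (a * b) := by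
    have := le_sqrt_aux b a hb.le hab; rwa [mul_comm] at this
  have hsac : c ≤ Real.sqrt (a * c) := by
    have := le_sqrt_aux c a hc.le hca; rwa [mul_comm] at this
  have hsbc : c ≤ Real.sqrt (b * c) := by
    have := le_sqrt_aux c b hc.le hbc; rwa [mul_comm] at this
  constructor
  · -- first inequality
    have hs : (0:ℝ) ≤ a - b := by linarith
    have hq : (0:ℝ) ≤ b - c := by linarith
    have ht0 : (0:ℝ) ≤ b + c - a := by linarith
    have key : (2 * b ^ 2 + 2 * c ^ 2 - a ^ 2) * (a + b) ^ 2 ≤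
        (b + c) ^ 2 * (2 * a ^ 2 + 2 * b ^ 2 - c ^ 2) := by
      nlinarith [mul_nonneg hq (pow_nonneg ht0 3),
        mul_nonneg (mul_nonneg hq hq) (mul_nonneg ht0 ht0),
        mul_nonneg (mul_nonneg (mul_nonneg hq hq) hq) ht0,
        mul_nonneg hs (pow_nonneg ht0 3),
        mul_nonneg (mul_nonneg hs hq) (mul_nonneg ht0 ht0),
        mul_nonneg (mul_nonneg hs (mul_nonneg hq hq)) ht0,
        mul_nonneg hs (pow_nonneg hq 3),
        mul_nonneg (mul_nonneg hs hs) (mul_nonneg ht0 ht0),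
        mul_nonneg (mul_nonneg (mul_nonneg hs hs) hq) ht0,
        mul_nonneg (mul_nonneg hs hs) (mul_nonneg hq hq),
        mul_nonneg (mul_nonneg (mul_nonneg hs hs) hs) ht0,
        mul_nonneg (mul_nonneg (mul_nonneg hs hs) hs) hq,
        mul_nonneg (mul_nonneg hs hs) (mul_nonneg hs hs)]
    have ht : (0:ℝ) < (b + c) / (a + b) := by positivity
    have step1 : Real.sqrt (2 * b ^ 2 + 2 * c ^ 2 - a ^ 2) ≤
        (b + c) / (a + b) * Real.sqrt (2 * a ^ 2 + 2 * b ^ 2 - c ^ 2) := by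
      have key' : 2 * b ^ 2 + 2 * c ^ 2 - a ^ 2 ≤
          ((b + c) / (a + b)) ^ 2 * (2 * a ^ 2 + 2 * b ^ 2 - c ^ 2) := by
        rw [div_pow, div_mul_eq_mul_div, le_div_iff₀ (by positivity)]
        linarith [key]
      calc Real.sqrt (2 * b ^ 2 + 2 * c ^ 2 - a ^ 2)
          ≤ Real.sqrt (((b + c) / (a + b)) ^ 2 * (2 * a ^ 2 + 2 * b ^ 2 - c ^ 2)) :=
            Real.sqrt_le_sqrt key'
        _ = (b + c) / (a + b) * Real.sqrt (2 * a ^ 2 + 2 * b ^ 2 - c ^ 2) := by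
            rw [Real.sqrt_mul (by positivity), Real.sqrt_sq ht.le]
    have step2 : (b + c) / (a + b) ≤
        (Real.sqrt (a * b) + Real.sqrt (a * c) + Real.sqrt (b * c)) / (a + b + c) := by
      rw [div_le_div_iff₀ (by positivity) (by positivity)]
      have hM : b + 2 * c ≤ Real.sqrt (a * b) + Real.sqrt (a * c) + Real.sqrt (b * c) := by
        linarith
      have := mul_le_mul_of_nonneg_right hM (show (0:ℝ) ≤ a + b by positivity)
      nlinarith [mul_nonneg hc.le (sub_nonneg.mpr hca)]
    have hhalf : ((1:ℝ)/2) * Real.sqrt (2 * b ^ 2 + 2 * c ^ 2 - a ^ 2) /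
        ((1/2) * Real.sqrt (2 * a ^ 2 + 2 * b ^ 2 - c ^ 2)) =
        Real.sqrt (2 * b ^ 2 + 2 * c ^ 2 - a ^ 2) /
        Real.sqrt (2 * a ^ 2 + 2 * b ^ 2 - c ^ 2) := by
      rw [mul_div_mul_left _ _ (by norm_num : (1:ℝ)/2 ≠ 0)]
    rw [hhalf]
    calc Real.sqrt (2 * b ^ 2 + 2 * c ^ 2 - a ^ 2) /
          Real.sqrt (2 * a ^ 2 + 2 * b ^ 2 - c ^ 2) ≤ (b + c) / (a + b) := by
          rw [div_le_iff₀ hsC]; linarith [step1]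
      _ ≤ _ := step2
  · rw [div_le_one (by positivity)]
    have h1' := amgm_aux a b ha.le hb.le
    have h2' := amgm_aux a c ha.le hc.le
    have h3' := amgm_aux b c hb.le hc.le
    linarith
end
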